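/- Fix β ∈ ℤ. The grove polynomials satisfy: G_∅^{(β)} = 1; ct G_F^{(β)} = 0 for every indexed forest F ≠ ∅; and for every indexed forest F and every i ≥ 1, π̃_i G_F^{(β)} = G_{F/i}^{(β)} if i ∈ QDes(F), while π̃_i G_F^{(β)} = −β · R_i(G_F^{(β)}) if i ∉ QDes(F). -/

import Mathlib

open MvPolynomial

/-- The ambient ring `R = ℤ[x₁, x₂, …]`, with variables indexed by positive integers. -/
abbrev MyR : Type := MvPolynomial ℕ+ ℤ

/-- The Bergeron–Sottile operator `R_i`: the `ℤ`-algebra map with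
`x_j ↦ x_j` for `j < i`, `x_i ↦ 0`, and `x_j ↦ x_{j-1}` for `j > i`. -/
noncomputable def BS (i : ℕ+) : MyR →ₐ[ℤ] MyR :=
  aeval fun j : ℕ+ =>
    if j < i then (X j : MyR) else if j = i then 0 else X (j - 1)

/-- Plane binary trees. -/
inductive BTree : Type
  | leaf : BTree
  | node : BTree → BTree → BTree
  deriving DecidableEq

namespace BTree

def numLeaves : BTree → ℕ+
  | leaf => 1
  | node l r => l.numLeaves + r.numLeaves

/-- Number of internal nodes. -/
def size : BTree → ℕ
  | leaf => 0
  | node l r => l.size + r.size + 1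

/-- `qdesSet T a` : the QDes positions contributed by a tree `T` whose leftmost
leaf carries the label `a` (leaves are labeled consecutively left-to-right). -/
def qdesSet : BTree → ℕ+ → Set ℕ+
  | leaf, _ => ∅
  | node leaf leaf, a => {a}
  | node l r, a => l.qdesSet a ∪ r.qdesSet (a + l.numLeaves)

/-- `trim T a i` : replace the terminal node whose leaf-children are labeled
`i`, `i+1` by a single leaf (`a` = label of the leftmost leaf of `T`). -/
def trim : BTree → ℕ+ → ℕ+ → BTree
  | leaf, _, _ => leaf
  | node l r, a, i =>
    if l = leaf ∧ r = leaf ∧ a = i then leaf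
    else node (l.trim a i) (r.trim (a + l.numLeaves) i)

/-- `rightAt T a i = true` iff the terminal node of `T` whose leaf-children are
labeled `i`, `i+1` is the right child of its parent. -/
def rightAt : BTree → ℕ+ → ℕ+ → Bool
  | leaf, _, _ => false
  | node l r, a, i =>
    l.rightAt a i || r.rightAt (a + l.numLeaves) i ||
      (decide (r = node leaf leaf) && decide (a + l.numLeaves = i))

end BTree

/-- An indexed forest: a sequence of plane binary trees, all but finitely many
of which are the single leaf. -/
structure IndexedForest : Type where
  trees : ℕ → BTree
  finite : {n : ℕ | trees n ≠ BTree.leaf}.Finite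

namespace IndexedForest

noncomputable def supp (F : IndexedForest) : Finset ℕ := F.finite.toFinset

/-- `|F|`, the number of internal nodes of `F`. -/
noncomputable def size (F : IndexedForest) : ℕ := ∑ n ∈ F.supp, (F.trees n).size

/-- The label of the leftmost leaf of the `n`-th tree (trees indexed from `0`;
leaves are labeled `1, 2, 3, …` from left to right across the trees). -/
def firstLeaf (F : IndexedForest) (n : ℕ) : ℕ+ :=
  ⟨1 + ∑ m ∈ Finset.range n, ((F.trees m).numLeaves : ℕ), by omega⟩

/-- `QDes(F)`. -/
def qdes (F : IndexedForest) : Set ℕ+ :=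
  ⋃ n : ℕ, (F.trees n).qdesSet (F.firstLeaf n)

/-- `F/i`, the forest obtained by replacing the terminal node with leaf-children
`i`, `i+1` by a single leaf. -/
def trim (F : IndexedForest) (i : ℕ+) : IndexedForest where
  trees := fun n => (F.trees n).trim (F.firstLeaf n) i
  finite := F.finite.subset (fun n hn => by
    simp only [Set.mem_setOf_eq] at hn ⊢
    intro h
    apply hn
    rw [h]
    rfl)

/-- The empty forest `∅`. -/
protected def empty : IndexedForest :=
  ⟨fun _ => BTree.leaf, Set.finite_empty.subset (fun _ hn => (hn rfl).elim)⟩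

/-- The terminal node of `F` at `i ∈ QDes F` is a right child. -/
def rightAt (F : IndexedForest) (i : ℕ+) : Prop :=
  ∃ n : ℕ, (F.trees n).rightAt (F.firstLeaf n) i = true

open Classical in
/-- `min QDes(F)` (defaulting to `1` if `QDes(F)` is empty, i.e. `F = ∅`). -/
noncomputable def minQDes (F : IndexedForest) : ℕ+ :=
  if h : ((fun i : ℕ+ => (i : ℕ)) '' F.qdes).Nonempty then
    ⟨sInf ((fun i : ℕ+ => (i : ℕ)) '' F.qdes), by
      obtain ⟨i, _, hieq⟩ := Nat.sInf_mem h
      exact hieq ▸ i.2⟩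
  else 1

end IndexedForest

/-- Set-valued labeled plane binary trees: each internal node carries a finite
set of positive integers. -/
inductive LTree : Type
  | leaf : LTree
  | node : Finset ℕ+ → LTree → LTree → LTree

namespace LTree

/-- Underlying unlabeled tree. -/
def shape : LTree → BTree
  | leaf => BTree.leaf
  | node _ l r => BTree.node l.shape r.shape

/-- The label set of the top of a subtree; a leaf with label `a` counts as the
singleton `{a}`. -/
def headSet : LTree → ℕ+ → Finset ℕ+
  | leaf, a => {a}
  | node S _ _, _ => S

/-- Compatibility of a set-valued labeling: every label set is nonempty,
`max κ(v) ≤ min κ(v_L)` and `max κ(v) < min κ(v_R)`.  The parameter `a` is the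
label of the leftmost leaf of the subtree. -/
def Compatible : LTree → ℕ+ → Prop
  | leaf, _ => True
  | node S l r, a =>
    S.Nonempty ∧ l.Compatible a ∧ r.Compatible (a + l.shape.numLeaves) ∧
    (∀ s ∈ S, ∀ t ∈ l.headSet a, s ≤ t) ∧
    (∀ s ∈ S, ∀ t ∈ r.headSet (a + l.shape.numLeaves), s < t)

/-- The monomial `x_κ` contributed by a labeled tree. -/
noncomputable def weight : LTree → MyR
  | leaf => 1
  | node S l r => (∏ j ∈ S, (X j : MyR)) * l.weight * r.weight

/-- `|κ|`, the total cardinality of the label sets. -/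
def lsize : LTree → ℕ
  | leaf => 0
  | node S l r => S.card + l.lsize + r.lsize

/-- All label sets are singletons. -/
def allSingle : LTree → Prop
  | leaf => True
  | node S l r => S.card = 1 ∧ l.allSingle ∧ r.allSingle

end LTree

/-- The type of compatible set-valued labelings of the indexed forest `F`. -/
def IndexedForest.Labelings (F : IndexedForest) : Type :=
  {κ : ℕ → LTree //
    (∀ n, (κ n).shape = F.trees n) ∧ ∀ n, (κ n).Compatible (F.firstLeaf n)}

/-- The grove polynomial `G_F^{(β)} = Σ_κ β^{|κ|-|F|} x_κ`. -/
noncomputable def groveP (β : ℤ) (F : IndexedForest) : MyR :=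
  ∑ᶠ κ : F.Labelings,
    C (β ^ ((∑ n ∈ F.supp, (κ.1 n).lsize) - F.size)) * ∏ n ∈ F.supp, (κ.1 n).weight

/-- The forest polynomial `𝔓_F`: the sum of `x_κ` over compatible set-valued
labelings all of whose label sets are singletons. -/
noncomputable def forestPoly (F : IndexedForest) : MyR :=
  ∑ᶠ κ : {κ : F.Labelings // ∀ n, (κ.1 n).allSingle},
    ∏ n ∈ F.supp, (κ.1.1 n).weight

open Classical in
/-- Fuel-indexed recursion implementing the grove extractor. -/
noncomputable def extractAux (T : ℕ+ → MyR → MyR) (β : ℤ) :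
    ℕ → IndexedForest → MyR → MyR
  | 0, _, f => f
  | k + 1, F, f =>
    if F = IndexedForest.empty then f
    else
      extractAux T β k (F.trim F.minQDes)
        (if F.rightAt F.minQDes then (1 + C β * X F.minQDes) * T F.minQDes f
         else T F.minQDes f)

/-- The grove extractor `Ĥ_F`: `Ĥ_∅ = id`, and for `F ≠ ∅` and `i = min QDes F`,
`Ĥ_F = Ĥ_{F/i} ∘ Ĥ^R_i` if the terminal node at `i` is a right child and
`Ĥ_F = Ĥ_{F/i} ∘ Ĥ^L_i` otherwise, where `Ĥ^L_i = T_i` and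
`Ĥ^R_i = (1 + βx_i)·T_i`.  (The recursion is implemented with fuel `|F|`, using
that `|F/i| = |F| - 1`.) -/
noncomputable def extract (T : ℕ+ → MyR → MyR) (β : ℤ) (F : IndexedForest) :
    MyR → MyR :=
  extractAux T β F.size F

/-- `S_∞`: permutations of `{1, 2, …}` fixing all but finitely many points. -/
def SPerm : Type := {w : Equiv.Perm ℕ+ // {x : ℕ+ | w x ≠ x}.Finite}

namespace SPerm

/-- The identity permutation. -/
protected def one : SPerm :=
  ⟨1, Set.finite_empty.subset (fun _ hx => (hx rfl).elim)⟩

/-- `w * s_i` where `s_i` is the transposition of `i` and `i+1`. -/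
noncomputable def mulSwap (w : SPerm) (i : ℕ+) : SPerm :=
  ⟨w.1 * Equiv.swap i (i + 1), by
    apply ((w.2.union (Set.finite_singleton i)).union
      (Set.finite_singleton (i + 1))).subset
    intro x hx
    simp only [Set.mem_setOf_eq, Equiv.Perm.mul_apply] at hx
    simp only [Set.mem_union, Set.mem_setOf_eq, Set.mem_singleton_iff]
    by_cases h1 : x = i
    · exact Or.inl (Or.inr h1)
    by_cases h2 : x = i + 1
    · exact Or.inr h2
    · exact Or.inl (Or.inl (by rwa [Equiv.swap_apply_of_ne_of_ne h1 h2] at hx))⟩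

/-- `ℓ(w)`, the number of inversions. -/
noncomputable def len (w : SPerm) : ℕ :=
  Set.ncard {p : ℕ+ × ℕ+ | p.1 < p.2 ∧ w.1 p.2 < w.1 p.1}

/-- `Des(w) = {i ≥ 1 : w(i) > w(i+1)}`. -/
def des (w : SPerm) : Set ℕ+ := {i : ℕ+ | w.1 (i + 1) < w.1 i}

end SPerm

/-- `f` is quasisymmetric in `x₁, …, xₙ`: no variable `x_j` with `j > n`
occurs, and coefficients of monomials with the same exponent word on strictly
increasing variable sequences in `{1, …, n}` agree. -/
def IsQuasisym (n : ℕ+) (f : MyR) : Prop :=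
  (∀ j : ℕ+, n < j → ∀ m ∈ f.support, m j = 0) ∧
  ∀ k : ℕ, 0 < k → ∀ a : Fin k → ℕ+, ∀ u v : Fin k → ℕ+,
    StrictMono u → StrictMono v → (∀ m, u m ≤ n) → (∀ m, v m ≤ n) →
    coeff (∑ m, Finsupp.single (u m) ((a m : ℕ))) f =
      coeff (∑ m, Finsupp.single (v m) ((a m : ℕ))) f

/-- The zigzag (chain) tree encoded by a list of booleans: the internal nodes
form a chain `v₁, …, v_k` (`k` = length + 1) and the `m`-th entry records
whether `v_{m+1}` is the right child of `v_m`. -/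
def chainTree : List Bool → BTree
  | [] => BTree.node BTree.leaf BTree.leaf
  | b :: rest =>
    if b then BTree.node BTree.leaf (chainTree rest)
    else BTree.node (chainTree rest) BTree.leaf


/-!
Write `P(t, a, b)` (`treePoly`) for the generating polynomial of the compatible labelings of a
tree `t` whose leaves are labeled from `a` on and whose root labels are `≥ b`; then `G_F` is the
product of the `P(Tₙ, aₙ, 1)` over the trees of `F`, and `P` satisfies a recursion over the
largest root label `m`. On such a polynomial `R_k` deletes the label `k` and shifts larger labels
down, so `R_k P(t, a + 1, b) = P(t, a, b)` whenever `t` lies weakly to the right of `k`.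
Consequently `R_{i+1}` and `R_i` agree on every tree not carrying a terminal node at `i`, while on
the tree that does, `R_{i+1} P - (1 + βx_i) R_i P = x_i P(t/i)`; at the terminal node itself this
is the telescoping identity
`β ∑_{b ≤ m ≤ a} x_m ∏_{b ≤ j < m} (1 + βx_j) = ∏_{b ≤ j ≤ a} (1 + βx_j) - 1`.
Since `x_i π̃_i f = R_{i+1} f - (1 + βx_i) R_i f`, this is the theorem.
-/

open Finset

section Reindex

variable {M : Type*} [CommMonoid M]

@[to_additive sum_Ico_add_one_add_one]
lemma prod_Ico_add_one_add_one (f : ℕ+ → M) (b c : ℕ+) :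
    ∏ m ∈ Ico (b + 1) (c + 1), f m = ∏ m ∈ Ico b c, f (m + 1) := by
  refine (prod_nbij' (· + 1) (· - 1) ?_ ?_ ?_ ?_ fun _ _ => rfl).symm
  all_goals intro m hm
  all_goals simp only [mem_Ico] at *
  all_goals pnat_to_nat; omega

@[to_additive sum_Ico_add_one_eq_add_sum_skip]
lemma prod_Ico_add_one_eq_mul_prod_skip (f : ℕ+ → M) {b k c : ℕ+} (hbk : b ≤ k)
    (hkc : k ≤ c) :
    ∏ m ∈ Ico b (c + 1), f m =
      f k * ∏ m ∈ Ico b c, if m < k then f m else f (m + 1) := by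
  rw [← Ico_union_Ico_eq_Ico hbk (Order.lt_add_one_iff.2 hkc).le,
    ← Ico_union_Ico_eq_Ico hbk hkc, prod_union (Ico_disjoint_Ico_consecutive _ _ _),
    prod_union (Ico_disjoint_Ico_consecutive _ _ _),
    ← insert_Ico_add_one_left_eq_Ico (Order.lt_add_one_iff.2 hkc),
    prod_insert (by simp), prod_Ico_add_one_add_one]
  rw [prod_congr rfl fun m hm => if_pos (mem_Ico.1 hm).2,
    prod_congr rfl fun m hm => if_neg (not_lt.2 (mem_Ico.1 hm).1)]
  exact mul_left_comm _ _ _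

end Reindex

section BergeronSottile

variable {i j : ℕ+}

lemma BS_C (i : ℕ+) (z : ℤ) : BS i (C z) = C z := by
  simp [BS]

lemma BS_X_of_lt (h : j < i) : BS i (X j) = X j := by
  simp [BS, h]

lemma BS_X_self (i : ℕ+) : BS i (X i) = 0 := by
  simp [BS]

lemma BS_X_add_one (h : i ≤ j) : BS i (X (j + 1)) = X j := by
  have h₁ : ¬ j + 1 < i := by pnat_to_nat; omega
  have h₂ : j + 1 ≠ i := ne_of_gt (by pnat_to_nat; omega)
  simp [BS, h₁, h₂]

lemma BS_one_add_C_mul_X (β : ℤ) (i j : ℕ+) :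
    BS i (1 + C β * X j) = 1 + C β * BS i (X j) := by
  rw [map_add, map_one, map_mul, BS_C]

end BergeronSottile

noncomputable def prodOneAdd (β : ℤ) (b m : ℕ+) : MyR :=
  ∏ j ∈ Ico b m, (1 + C β * X j)

section prodOneAdd

variable {β : ℤ} {b k m : ℕ+}

lemma prodOneAdd_of_le (h : m ≤ b) : prodOneAdd β b m = 1 := by
  simp [prodOneAdd, Ico_eq_empty_of_le h]

lemma BS_prodOneAdd_of_le (h : m ≤ k) : BS k (prodOneAdd β b m) = prodOneAdd β b m := by
  rw [prodOneAdd, map_prod]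
  refine prod_congr rfl fun j hj => ?_
  rw [BS_one_add_C_mul_X, BS_X_of_lt ((mem_Ico.1 hj).2.trans_le h)]

lemma BS_prodOneAdd_add_one_add_one (h : k ≤ b) :
    BS k (prodOneAdd β (b + 1) (m + 1)) = prodOneAdd β b m := by
  rw [prodOneAdd, map_prod, prod_Ico_add_one_add_one]
  refine prod_congr rfl fun j hj => ?_
  rw [BS_one_add_C_mul_X, BS_X_add_one (h.trans (mem_Ico.1 hj).1)]

lemma BS_prodOneAdd_add_one (hb : b ≤ k) (hm : k ≤ m) :
    BS k (prodOneAdd β b (m + 1)) = prodOneAdd β b m := by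
  rw [prodOneAdd, map_prod, prod_Ico_add_one_eq_mul_prod_skip _ hb hm, BS_one_add_C_mul_X,
    BS_X_self, mul_zero, add_zero, one_mul]
  refine prod_congr rfl fun j _ => ?_
  split_ifs with hj
  · rw [BS_one_add_C_mul_X, BS_X_of_lt hj]
  · rw [BS_one_add_C_mul_X, BS_X_add_one (not_lt.1 hj)]

lemma C_mul_sum_X_mul_prodOneAdd (β : ℤ) (b a : ℕ+) :
    C β * ∑ m ∈ Icc b a, X m * prodOneAdd β b m = prodOneAdd β b (a + 1) - 1 := by
  have h := prod_add_ordered (Ico b (a + 1)) (fun _ => (1 : MyR)) fun j => C β * X j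
  simp only [prod_const_one, mul_one] at h
  rw [prodOneAdd, h, add_sub_cancel_left, ← Ico_add_one_right_eq_Icc, mul_sum]
  refine sum_congr rfl fun m hm => ?_
  rw [Ico_filter_lt_of_le_right (mem_Ico.1 hm).2.le, prodOneAdd]
  ring

lemma prodOneAdd_eq_sum_powerset (β : ℤ) (b m : ℕ+) :
    prodOneAdd β b m = ∑ A ∈ (Ico b m).powerset, C β ^ #A * ∏ j ∈ A, (X j : MyR) := by
  rw [prodOneAdd, prod_one_add]
  simp only [prod_mul_distrib, prod_const]

end prodOneAdd

namespace BTree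

variable {l r t : BTree} {a i : ℕ+}

lemma notMem_qdesSet_leaf : i ∉ leaf.qdesSet a := id

lemma numLeaves_node : (node l r).numLeaves = l.numLeaves + r.numLeaves := rfl

lemma mem_qdesSet_node :
    i ∈ (node l r).qdesSet a ↔
      (l = leaf ∧ r = leaf ∧ i = a) ∨ i ∈ l.qdesSet a ∨
        i ∈ r.qdesSet (a + l.numLeaves) := by
  cases l <;> cases r <;> simp [qdesSet]

lemma bounds_of_mem_qdesSet (h : i ∈ t.qdesSet a) : a ≤ i ∧ i + 1 < a + t.numLeaves := by
  induction t generalizing a with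
  | leaf => exact absurd h notMem_qdesSet_leaf
  | node l r ihl ihr =>
    rw [numLeaves_node]
    rcases mem_qdesSet_node.1 h with ⟨rfl, rfl, rfl⟩ | h | h
    · exact ⟨le_rfl, by simp [numLeaves]⟩
    · have := ihl h; pnat_to_nat; omega
    · have := ihr h; pnat_to_nat; omega

lemma trim_eq_self (h : i ∉ t.qdesSet a) : t.trim a i = t := by
  induction t generalizing a with
  | leaf => rfl
  | node l r ihl ihr =>
    simp only [mem_qdesSet_node, not_or] at h
    rw [trim, if_neg fun h' => h.1 ⟨h'.1, h'.2.1, h'.2.2.symm⟩, ihl h.2.1, ihr h.2.2]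

lemma trim_node_of_mem_left (hl : i ∈ l.qdesSet a) :
    (node l r).trim a i = node (l.trim a i) r := by
  have hr : i ∉ r.qdesSet (a + l.numLeaves) := fun hr => by
    have := bounds_of_mem_qdesSet hl; have := bounds_of_mem_qdesSet hr
    pnat_to_nat; omega
  have hl' : l ≠ leaf := by rintro rfl; exact notMem_qdesSet_leaf hl
  rw [trim, if_neg fun h => hl' h.1, trim_eq_self hr]

lemma trim_node_of_mem_right (hr : i ∈ r.qdesSet (a + l.numLeaves)) :
    (node l r).trim a i = node l (r.trim (a + l.numLeaves) i) := by
  have hl : i ∉ l.qdesSet a := fun hl => by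
    have := bounds_of_mem_qdesSet hl; have := bounds_of_mem_qdesSet hr
    pnat_to_nat; omega
  have hr' : r ≠ leaf := by rintro rfl; exact notMem_qdesSet_leaf hr
  rw [trim, if_neg fun h => hr' h.2.1, trim_eq_self hl]

lemma numLeaves_trim_add_one (h : i ∈ t.qdesSet a) :
    (t.trim a i).numLeaves + 1 = t.numLeaves := by
  induction t generalizing a with
  | leaf => exact absurd h notMem_qdesSet_leaf
  | node l r ihl ihr =>
    rcases mem_qdesSet_node.1 h with ⟨rfl, rfl, rfl⟩ | hl | hr
    · simp [trim, numLeaves]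
    · rw [trim_node_of_mem_left hl, numLeaves_node, numLeaves_node, add_right_comm, ihl hl]
    · rw [trim_node_of_mem_right hr, numLeaves_node, numLeaves_node, add_assoc, ihr hr]

end BTree

/-- `treePoly β t a b` is the sum of `β ^ (|κ| - |t|) * x_κ` over the compatible set-valued
labelings `κ` of `t` whose leaves are labeled from `a` on and whose root labels are all `≥ b`;
`m` is the largest root label and the other root labels form a subset of `[b, m)`. -/
noncomputable def treePoly (β : ℤ) : BTree → ℕ+ → ℕ+ → MyR
  | .leaf, a, b => if b ≤ a then 1 else 0
  | .node l r, a, b =>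
    ∑ m ∈ Icc b a, X m * prodOneAdd β b m * treePoly β l a m *
      treePoly β r (a + l.numLeaves) (m + 1)

section treePoly

open BTree

variable {β : ℤ} {t : BTree} {a b k : ℕ+}

lemma treePoly_node_self (β : ℤ) (l r : BTree) (i : ℕ+) :
    treePoly β (node l r) i i =
      X i * treePoly β l i i * treePoly β r (i + l.numLeaves) (i + 1) := by
  rw [treePoly, Icc_self, sum_singleton, prodOneAdd_of_le le_rfl, mul_one]

lemma BS_treePoly_node_self (β : ℤ) (l r : BTree) (i : ℕ+) :
    BS i (treePoly β (node l r) i i) = 0 := by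
  rw [treePoly_node_self, map_mul, map_mul, BS_X_self, zero_mul, zero_mul]

lemma BS_treePoly_leaf (β : ℤ) (k a b : ℕ+) :
    BS k (treePoly β leaf a b) = treePoly β leaf a b := by
  simp only [treePoly]
  split_ifs <;> simp

lemma BS_treePoly_of_le (h : a + t.numLeaves ≤ k + 1) :
    BS k (treePoly β t a b) = treePoly β t a b := by
  induction t generalizing a b with
  | leaf => exact BS_treePoly_leaf β k a b
  | node l r ihl ihr =>
    have := l.numLeaves.pos
    have := r.numLeaves.pos
    rw [numLeaves_node] at h
    rw [treePoly, map_sum]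
    refine sum_congr rfl fun m hm => ?_
    have hm := mem_Icc.1 hm
    simp only [map_mul]
    rw [BS_X_of_lt (by pnat_to_nat; omega), BS_prodOneAdd_of_le (by pnat_to_nat; omega),
      ihl (by pnat_to_nat; omega), ihr (by pnat_to_nat; omega)]

lemma BS_treePoly_add_one_add_one (h : k ≤ b) :
    BS k (treePoly β t (a + 1) (b + 1)) = treePoly β t a b := by
  induction t generalizing a b with
  | leaf => simp [treePoly, apply_ite]
  | node l r ihl ihr =>
    rw [treePoly, treePoly, map_sum, ← Ico_add_one_right_eq_Icc, ← Ico_add_one_right_eq_Icc,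
      sum_Ico_add_one_add_one]
    refine sum_congr rfl fun m hm => ?_
    have hkm : k ≤ m := h.trans (mem_Ico.1 hm).1
    simp only [map_mul]
    rw [BS_X_add_one hkm, BS_prodOneAdd_add_one_add_one h, ihl hkm, add_right_comm a 1,
      ihr (hkm.trans (PNat.lt_add_right _ _).le)]

lemma BS_treePoly_add_one (hba : b ≤ a) (hbk : b ≤ k) (hka : k ≤ a + 1) :
    BS k (treePoly β t (a + 1) b) = treePoly β t a b := by
  induction t generalizing a b with
  | leaf => simp [treePoly, hba, hba.trans (PNat.lt_add_right a 1).le]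
  | node l r ihl ihr =>
    have := l.numLeaves.pos
    rw [treePoly, treePoly, map_sum, ← Ico_add_one_right_eq_Icc, ← Ico_add_one_right_eq_Icc,
      sum_Ico_add_one_eq_add_sum_skip _ hbk hka]
    simp only [map_mul, BS_X_self, zero_mul, zero_add]
    refine sum_congr rfl fun m hm => ?_
    have hm := mem_Ico.1 hm
    rw [add_right_comm a 1]
    split_ifs with hmk
    · rw [BS_X_of_lt hmk, BS_prodOneAdd_of_le hmk.le, ihl (by pnat_to_nat; omega) hmk.le hka,
        ihr (by pnat_to_nat; omega) (by pnat_to_nat; omega) (by pnat_to_nat; omega)]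
    · have hkm := not_lt.1 hmk
      rw [BS_X_add_one hkm, BS_prodOneAdd_add_one hbk hkm, BS_treePoly_add_one_add_one hkm,
        BS_treePoly_add_one_add_one (hkm.trans (PNat.lt_add_right _ _).le)]

end treePoly

noncomputable def BSDiff (β : ℤ) (i : ℕ+) (f : MyR) : MyR :=
  BS (i + 1) f - (1 + C β * X i) * BS i f

section qdes

open BTree

variable {β : ℤ} {t l r : BTree} {a b i : ℕ+}

lemma BS_add_one_treePoly_self_eq_zero (ht : t ≠ leaf) (hi : i ∉ t.qdesSet i) :
    BS (i + 1) (treePoly β t i i) = 0 := by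
  induction t with
  | leaf => exact absurd rfl ht
  | node l r ihl _ =>
    rw [treePoly_node_self, map_mul, map_mul]
    by_cases hl : l = leaf
    · subst hl
      cases r with
      | leaf => exact absurd (mem_qdesSet_node.2 (Or.inl ⟨rfl, rfl, rfl⟩)) hi
      | node r₁ r₂ =>
        rw [show i + leaf.numLeaves = i + 1 from rfl, BS_treePoly_node_self, mul_zero]
    · rw [ihl hl fun h => hi (mem_qdesSet_node.2 (Or.inr (Or.inl h))), mul_zero, zero_mul]

lemma BS_add_one_treePoly_of_notMem_qdesSet (hbi : b ≤ i) (hi : i ∉ t.qdesSet a) :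
    BS (i + 1) (treePoly β t a b) = BS i (treePoly β t a b) := by
  induction t generalizing a b with
  | leaf => rw [BS_treePoly_leaf, BS_treePoly_leaf]
  | node l r ihl ihr =>
    rcases lt_or_ge i a with hia | hai
    · -- the whole tree lies to the right of `i`, where both operators merely shift labels down
      obtain ⟨a, rfl⟩ :=
        PNat.exists_eq_succ_of_ne_one (n := a) (ne_of_gt (by pnat_to_nat; omega))
      have hba : b ≤ a := hbi.trans (Order.lt_add_one_iff.1 hia)
      rw [BS_treePoly_add_one hba (hbi.trans (PNat.lt_add_right i 1).le) (by pnat_to_nat; omega),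
        BS_treePoly_add_one hba hbi (PNat.lt_add_right i 1 |>.le.trans (by pnat_to_nat; omega))]
    simp only [mem_qdesSet_node, not_or] at hi
    rw [treePoly, map_sum, map_sum]
    refine sum_congr rfl fun m hm => ?_
    obtain ⟨hbm, hma⟩ := mem_Icc.1 hm
    rcases (hma.trans hai).lt_or_eq with hmi | rfl
    · simp only [map_mul]
      rw [BS_X_of_lt hmi, BS_X_of_lt (hmi.trans (PNat.lt_add_right i 1)),
        BS_prodOneAdd_of_le hmi.le, BS_prodOneAdd_of_le (hmi.trans (PNat.lt_add_right i 1)).le,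
        ihl hmi.le hi.2.1, ihr (Order.add_one_le_iff.2 hmi) hi.2.2]
    · obtain rfl : a = m := le_antisymm hai hma
      have hterm : X a * prodOneAdd β b a * treePoly β l a a *
          treePoly β r (a + l.numLeaves) (a + 1) =
            prodOneAdd β b a * treePoly β (node l r) a a := by
        rw [treePoly_node_self]; ring
      rw [hterm, map_mul, map_mul, BS_treePoly_node_self, BS_add_one_treePoly_self_eq_zero (by simp)
        (mem_qdesSet_node.not.2 (by tauto)), mul_zero, mul_zero]

lemma BSDiff_treePoly_terminal (hbi : b ≤ i) :
    BSDiff β i (treePoly β (node leaf leaf) i b) = X i := by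
  set P := treePoly β (node leaf leaf) i b
  have hP : P = ∑ m ∈ Icc b i, X m * prodOneAdd β b m := by
    refine sum_congr rfl fun m hm => ?_
    have hmi := (mem_Icc.1 hm).2
    simp [treePoly, numLeaves, hmi]
  have hfix : BS (i + 1) P = P :=
    BS_treePoly_of_le (by simp only [numLeaves, ← add_assoc, le_rfl])
  have hdrop : BS i P = P - X i * prodOneAdd β b i := by
    rw [hP, ← Ico_insert_right hbi, sum_insert (by simp), map_add, map_mul, BS_X_self, zero_mul,
      zero_add, map_sum, add_sub_cancel_left]
    refine sum_congr rfl fun m hm => ?_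
    have hmi := (mem_Ico.1 hm).2
    rw [map_mul, BS_X_of_lt hmi, BS_prodOneAdd_of_le hmi.le]
  have htel := C_mul_sum_X_mul_prodOneAdd β b i
  rw [← hP, prodOneAdd, ← insert_Ico_right_eq_Ico_add_one hbi, prod_insert (by simp),
    ← prodOneAdd] at htel
  rw [BSDiff, hfix, hdrop]
  linear_combination (-X i) * htel

lemma BSDiff_treePoly_node_left
    (ihl : ∀ {b}, b ≤ i →
      BSDiff β i (treePoly β l a b) = X i * treePoly β (l.trim a i) a b)
    (hl : i ∈ l.qdesSet a) (hbi : b ≤ i) :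
    BSDiff β i (treePoly β (node l r) a b) = X i * treePoly β (node (l.trim a i) r) a b := by
  obtain ⟨hai, hil⟩ := bounds_of_mem_qdesSet hl
  have hc := numLeaves_trim_add_one hl
  set c := a + (l.trim a i).numLeaves
  have hac : a + l.numLeaves = c + 1 := by rw [← hc, add_assoc]
  have hic : i + 1 ≤ c := by pnat_to_nat; omega
  simp only [BSDiff, treePoly, map_sum, mul_sum, ← sum_sub_distrib, hac]
  refine sum_congr rfl fun m hm => ?_
  obtain ⟨hbm, hma⟩ := mem_Icc.1 hm
  have hmi : m ≤ i := hma.trans hai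
  have hmc : m + 1 ≤ c := by pnat_to_nat; omega
  have key := ihl hmi
  simp only [BSDiff] at key
  simp only [map_mul]
  rw [BS_X_of_lt (hmi.trans_lt (PNat.lt_add_right i 1)),
    BS_prodOneAdd_of_le (hmi.trans (PNat.lt_add_right i 1).le),
    BS_treePoly_add_one hmc (by pnat_to_nat; omega) (by pnat_to_nat; omega)]
  rcases hmi.lt_or_eq with hmi | rfl
  · rw [BS_X_of_lt hmi, BS_prodOneAdd_of_le hmi.le, BS_treePoly_add_one hmc (by pnat_to_nat; omega)
      (by pnat_to_nat; omega)]
    linear_combination (X m * prodOneAdd β b m * treePoly β r c (m + 1)) * key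
  · obtain rfl : a = m := le_antisymm hai hma
    obtain ⟨l₁, l₂, rfl⟩ : ∃ l₁ l₂, l = node l₁ l₂ := by
      cases l with
      | leaf => exact absurd hl notMem_qdesSet_leaf
      | node l₁ l₂ => exact ⟨l₁, l₂, rfl⟩
    rw [BS_treePoly_node_self] at key
    rw [BS_X_self]
    linear_combination (X a * prodOneAdd β b a * treePoly β r c (a + 1)) * key

lemma BSDiff_treePoly_node_right
    (ihr : ∀ {b}, b ≤ i → BSDiff β i (treePoly β r (a + l.numLeaves) b) =
      X i * treePoly β (r.trim (a + l.numLeaves) i) (a + l.numLeaves) b)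
    (hr : i ∈ r.qdesSet (a + l.numLeaves)) :
    BSDiff β i (treePoly β (node l r) a b) =
      X i * treePoly β (node l (r.trim (a + l.numLeaves) i)) a b := by
  have hli := (bounds_of_mem_qdesSet hr).1
  have := l.numLeaves.pos
  simp only [BSDiff, treePoly, map_sum, mul_sum, ← sum_sub_distrib]
  refine sum_congr rfl fun m hm => ?_
  have hma := (mem_Icc.1 hm).2
  have hmi : m < i := by pnat_to_nat; omega
  have key := ihr (Order.add_one_le_iff.2 hmi)
  simp only [BSDiff] at key
  simp only [map_mul]
  rw [BS_X_of_lt hmi, BS_X_of_lt (hmi.trans (PNat.lt_add_right i 1)),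
    BS_prodOneAdd_of_le hmi.le, BS_prodOneAdd_of_le (hmi.trans (PNat.lt_add_right i 1)).le,
    BS_treePoly_of_le (t := l) (by pnat_to_nat; omega),
    BS_treePoly_of_le (t := l) (by pnat_to_nat; omega)]
  linear_combination (X m * prodOneAdd β b m * treePoly β l a m) * key

lemma BSDiff_treePoly_of_mem_qdesSet (hbi : b ≤ i) (hi : i ∈ t.qdesSet a) :
    BSDiff β i (treePoly β t a b) = X i * treePoly β (t.trim a i) a b := by
  induction t generalizing a b with
  | leaf => exact absurd hi notMem_qdesSet_leaf
  | node l r ihl ihr =>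
    rcases mem_qdesSet_node.1 hi with ⟨rfl, rfl, rfl⟩ | hl | hr
    · rw [trim, if_pos ⟨rfl, rfl, rfl⟩, BSDiff_treePoly_terminal hbi]
      simp [treePoly, hbi]
    · rw [trim_node_of_mem_left hl]
      exact BSDiff_treePoly_node_left (fun hb => ihl hb hl) hl hbi
    · rw [trim_node_of_mem_right hr]
      exact BSDiff_treePoly_node_right (fun hb => ihr hb hr) hr

end qdes

namespace LTree

variable {lt : LTree} {a : ℕ+}

lemma shape_eq_leaf : lt.shape = BTree.leaf ↔ lt = leaf := by
  cases lt <;> simp [shape]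

lemma exists_mem_headSet_le (h : lt.Compatible a) : ∃ u ∈ lt.headSet a, u ≤ a := by
  induction lt generalizing a with
  | leaf => exact ⟨a, mem_singleton_self a, le_rfl⟩
  | node S l r ihl _ =>
    obtain ⟨⟨s, hs⟩, hl, -, hle, -⟩ := h
    obtain ⟨u, hu, hua⟩ := ihl hl
    exact ⟨s, hs, (hle s hs u hu).trans hua⟩

lemma size_shape_le_lsize (h : lt.Compatible a) : lt.shape.size ≤ lt.lsize := by
  induction lt generalizing a with
  | leaf => exact le_rfl
  | node S l r ihl ihr =>
    obtain ⟨hS, hl, hr, -, -⟩ := h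
    have := ihl hl
    have := ihr hr
    have := hS.card_pos
    simp only [shape, BTree.size, lsize]
    omega

end LTree

deriving instance DecidableEq for LTree

def treeLabelings : BTree → ℕ+ → ℕ+ → Finset LTree
  | .leaf, a, b => if b ≤ a then {LTree.leaf} else ∅
  | .node l r, a, b =>
    ((Icc b a).sigma fun m => (Ico b m).powerset ×ˢ
        (treeLabelings l a m ×ˢ treeLabelings r (a + l.numLeaves) (m + 1))).image
      fun x => LTree.node (insert x.1 x.2.1) x.2.2.1 x.2.2.2

lemma eq_and_eq_of_insert_eq_insert {b m m' : ℕ+} {A A' : Finset ℕ+} (hA : A ⊆ Ico b m)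
    (hA' : A' ⊆ Ico b m') (h : insert m A = insert m' A') : m = m' ∧ A = A' := by
  have hle : ∀ {m m' : ℕ+} {A : Finset ℕ+}, A ⊆ Ico b m → m' ∈ insert m A → m' ≤ m :=
    fun hA h => (mem_insert.1 h).elim le_of_eq fun h => (mem_Ico.1 (hA h)).2.le
  obtain rfl : m = m' :=
    le_antisymm (hle hA' (h ▸ mem_insert_self m A)) (hle hA (h ▸ mem_insert_self m' A'))
  refine ⟨rfl, ?_⟩
  rw [← erase_insert fun hm => (mem_Ico.1 (hA hm)).2.false,
    ← erase_insert fun hm => (mem_Ico.1 (hA' hm)).2.false, h]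

lemma mem_treeLabelings {t : BTree} {a b : ℕ+} {lt : LTree} :
    lt ∈ treeLabelings t a b ↔
      lt.shape = t ∧ lt.Compatible a ∧ ∀ u ∈ lt.headSet a, b ≤ u := by
  induction t generalizing a b lt with
  | leaf =>
    rw [treeLabelings, LTree.shape_eq_leaf]
    split_ifs with h
    · simp only [mem_singleton]
      constructor
      · rintro rfl
        exact ⟨rfl, trivial, by simpa [LTree.headSet] using h⟩
      · exact fun h => h.1
    · simp only [notMem_empty, false_iff]
      rintro ⟨rfl, -, hu⟩
      exact h (hu a (mem_singleton_self a))
  | node l r ihl ihr =>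
    simp only [treeLabelings, mem_image, mem_sigma, mem_product, mem_powerset, ihl, ihr]
    constructor
    · rintro ⟨⟨m, A, l', r'⟩, ⟨hm, hA, ⟨rfl, hl, hlm⟩, ⟨rfl, hr, hrm⟩⟩, rfl⟩
      have hAm : ∀ s ∈ insert m A, b ≤ s ∧ s ≤ m := by
        intro s hs
        rcases mem_insert.1 hs with rfl | hs
        · exact ⟨(mem_Icc.1 hm).1, le_rfl⟩
        · exact ⟨(mem_Ico.1 (hA hs)).1, (mem_Ico.1 (hA hs)).2.le⟩
      refine ⟨rfl, ⟨⟨m, mem_insert_self m A⟩, hl, hr, ?_, ?_⟩, fun s hs => (hAm s hs).1⟩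
      · exact fun s hs u hu => (hAm s hs).2.trans (hlm u hu)
      · exact fun s hs u hu => (hAm s hs).2.trans_lt (Order.add_one_le_iff.1 (hrm u hu))
    · rintro ⟨hshape, hc, hb⟩
      cases lt with
      | leaf => exact absurd hshape (by simp [LTree.shape])
      | node S l' r' =>
        obtain ⟨rfl, rfl⟩ : l'.shape = l ∧ r'.shape = r := by simpa [LTree.shape] using hshape
        obtain ⟨hS, hl, hr, hle, hlt⟩ := hc
        obtain ⟨u, hu, hua⟩ := LTree.exists_mem_headSet_le hl
        have hmS := S.max'_mem hS
        refine ⟨⟨S.max' hS, S.erase (S.max' hS), l', r'⟩,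
          ⟨mem_Icc.2 ⟨hb _ hmS, (hle _ hmS u hu).trans hua⟩, fun s hs => ?_,
            ⟨rfl, hl, hle _ hmS⟩,
            ⟨rfl, hr, fun u hu => Order.add_one_le_of_lt (hlt _ hmS u hu)⟩⟩,
          by simp [insert_erase hmS]⟩
        obtain ⟨hne, hsS⟩ := mem_erase.1 hs
        exact mem_Ico.2 ⟨hb s hsS, lt_of_le_of_ne (S.le_max' s hsS) hne⟩

lemma weight_node_insert (β : ℤ) {l r : BTree} {l' r' : LTree} {m : ℕ+} {A : Finset ℕ+}
    (hm : m ∉ A) (hl : l.size ≤ l'.lsize) (hr : r.size ≤ r'.lsize) :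
    C (β ^ ((LTree.node (insert m A) l' r').lsize - (BTree.node l r).size)) *
        (LTree.node (insert m A) l' r').weight =
      X m * ((C β ^ #A * ∏ j ∈ A, X j) * ((C (β ^ (l'.lsize - l.size)) * l'.weight) *
        (C (β ^ (r'.lsize - r.size)) * r'.weight))) := by
  simp only [LTree.lsize, LTree.weight, BTree.size, card_insert_of_notMem hm, prod_insert hm]
  rw [show #A + 1 + l'.lsize + r'.lsize - (l.size + r.size + 1) =
    #A + (l'.lsize - l.size) + (r'.lsize - r.size) by omega]
  simp only [pow_add, map_mul, map_pow]
  ring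

lemma sum_treeLabelings (β : ℤ) (t : BTree) (a b : ℕ+) :
    ∑ lt ∈ treeLabelings t a b, C (β ^ (lt.lsize - t.size)) * lt.weight =
      treePoly β t a b := by
  induction t generalizing a b with
  | leaf =>
    rw [treeLabelings, treePoly]
    split_ifs <;> simp [LTree.lsize, LTree.weight]
  | node l r ihl ihr =>
    rw [treeLabelings, sum_image, sum_sigma, treePoly]
    · refine sum_congr rfl fun m _ => ?_
      rw [prodOneAdd_eq_sum_powerset, ← ihl, ← ihr, mul_assoc, mul_assoc, sum_mul_sum,
        ← sum_product', sum_mul_sum, ← sum_product', mul_sum]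
      refine sum_congr rfl fun ⟨A, l', r'⟩ hx => ?_
      simp only [mem_product, mem_powerset, mem_treeLabelings] at hx
      obtain ⟨hA, ⟨rfl, hl, -⟩, ⟨rfl, hr, -⟩⟩ := hx
      exact weight_node_insert β (fun hm => (mem_Ico.1 (hA hm)).2.false)
        (LTree.size_shape_le_lsize hl) (LTree.size_shape_le_lsize hr)
    · rintro ⟨m, A, l', r'⟩ hx ⟨m', A', l'', r''⟩ hy h
      simp only [coe_sigma, Set.mem_sigma_iff, coe_product, Set.mem_prod, mem_coe,
        mem_powerset] at hx hy
      simp only [LTree.node.injEq] at h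
      obtain ⟨rfl, rfl⟩ := eq_and_eq_of_insert_eq_insert hx.2.1 hy.2.1 h.1
      obtain ⟨-, rfl, rfl⟩ := h
      rfl

namespace IndexedForest

variable {F : IndexedForest}

lemma mem_supp {n : ℕ} : n ∈ F.supp ↔ F.trees n ≠ BTree.leaf :=
  Set.Finite.mem_toFinset _

lemma Labelings.eq_leaf (κ : F.Labelings) {n : ℕ} (hn : n ∉ F.supp) : κ.1 n = LTree.leaf :=
  LTree.shape_eq_leaf.1 ((κ.2.1 n).trans (not_not.1 (mem_supp.not.1 hn)))

lemma Labelings.mem_treeLabelings (κ : F.Labelings) (n : ℕ) :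
    κ.1 n ∈ treeLabelings (F.trees n) (F.firstLeaf n) 1 :=
  _root_.mem_treeLabelings.2 ⟨κ.2.1 n, κ.2.2 n, fun _ _ => one_le⟩

instance (F : IndexedForest) : Finite F.Labelings := by
  refine Finite.of_injective (fun κ (n : F.supp) =>
    (⟨κ.1 n, κ.mem_treeLabelings n⟩ : treeLabelings (F.trees n) (F.firstLeaf n) 1)) ?_
  intro κ κ' h
  refine Subtype.ext (funext fun n => ?_)
  by_cases hn : n ∈ F.supp
  · exact congrArg Subtype.val (congrFun h ⟨n, hn⟩)
  · rw [κ.eq_leaf hn, κ'.eq_leaf hn]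

end IndexedForest

open IndexedForest in
lemma groveP_eq_prod_treePoly (β : ℤ) (F : IndexedForest) :
    groveP β F = ∏ n ∈ F.supp, treePoly β (F.trees n) (F.firstLeaf n) 1 := by
  classical
  have := Fintype.ofFinite F.Labelings
  rw [groveP, finsum_eq_sum_of_fintype, ← prod_coe_sort,
    prod_congr rfl fun n _ => (sum_treeLabelings β _ _ _).symm, prod_univ_sum]
  refine sum_bij' (fun κ _ n => κ.1 n)
    (fun x hx => ⟨fun n => if h : n ∈ F.supp then x ⟨n, h⟩ else LTree.leaf,
      fun n => ?_, fun n => ?_⟩)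
    (fun κ _ => Fintype.mem_piFinset.2 fun n => κ.mem_treeLabelings n) (fun _ _ => mem_univ _)
    (fun κ _ => Subtype.ext (funext fun n => ?_)) (fun x _ => funext fun n => dif_pos n.2)
    fun κ _ => ?_
  · have := fun h => mem_treeLabelings.1 (Fintype.mem_piFinset.1 hx ⟨n, h⟩)
    dsimp only
    split_ifs with h
    · exact (this h).1
    · exact (not_not.1 (mem_supp.not.1 h)).symm
  · have := fun h => mem_treeLabelings.1 (Fintype.mem_piFinset.1 hx ⟨n, h⟩)
    dsimp only
    split_ifs with h
    exacts [(this h).2.1, trivial]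
  · dsimp only
    split_ifs with h
    exacts [rfl, (κ.eq_leaf h).symm]
  · have hsize : ∀ n ∈ F.supp, (F.trees n).size ≤ (κ.1 n).lsize := fun n _ =>
      κ.2.1 n ▸ LTree.size_shape_le_lsize (κ.2.2 n)
    rw [prod_mul_distrib,
      prod_coe_sort F.supp fun n => C (β ^ ((κ.1 n).lsize - (F.trees n).size)),
      prod_coe_sort F.supp fun n => (κ.1 n).weight, ← map_prod, prod_pow_eq_pow_sum,
      sum_tsub_distrib _ hsize]
    rfl

namespace IndexedForest

variable {F : IndexedForest} {i : ℕ+} {m n n₀ : ℕ}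

lemma firstLeaf_add_one (F : IndexedForest) (n : ℕ) :
    F.firstLeaf (n + 1) = F.firstLeaf n + (F.trees n).numLeaves := by
  apply PNat.eq
  rw [PNat.add_coe]
  simp only [firstLeaf, PNat.mk_coe, sum_range_succ]
  omega

lemma firstLeaf_add_numLeaves_le (h : m < n) :
    F.firstLeaf m + (F.trees m).numLeaves ≤ F.firstLeaf n := by
  rw [← firstLeaf_add_one, ← PNat.coe_le_coe]
  exact Nat.add_le_add_left (sum_le_sum_of_subset (range_subset_range.2 h)) 1

lemma eq_of_mem_qdesSet (hm : i ∈ (F.trees m).qdesSet (F.firstLeaf m))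
    (hn : i ∈ (F.trees n).qdesSet (F.firstLeaf n)) : m = n := by
  have := BTree.bounds_of_mem_qdesSet hm
  have := BTree.bounds_of_mem_qdesSet hn
  by_contra hmn
  rcases Nat.lt_or_gt_of_ne hmn with h | h <;>
  · have := firstLeaf_add_numLeaves_le (F := F) h
    pnat_to_nat; omega

lemma trees_trim_of_ne (h₀ : i ∈ (F.trees n₀).qdesSet (F.firstLeaf n₀)) (hn : n ≠ n₀) :
    (F.trim i).trees n = F.trees n :=
  BTree.trim_eq_self fun h => hn (eq_of_mem_qdesSet h h₀)

lemma firstLeaf_trim_of_le (h₀ : i ∈ (F.trees n₀).qdesSet (F.firstLeaf n₀)) (hn : n ≤ n₀) :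
    (F.trim i).firstLeaf n = F.firstLeaf n := by
  induction n with
  | zero => rfl
  | succ n ih =>
    rw [firstLeaf_add_one, firstLeaf_add_one, ih (by omega), trees_trim_of_ne h₀ (by omega)]

lemma firstLeaf_trim_add_one_of_lt (h₀ : i ∈ (F.trees n₀).qdesSet (F.firstLeaf n₀))
    (hn : n₀ < n) : (F.trim i).firstLeaf n + 1 = F.firstLeaf n := by
  induction n, hn using Nat.le_induction with
  | base =>
    rw [firstLeaf_add_one, firstLeaf_add_one, firstLeaf_trim_of_le h₀ le_rfl, add_assoc]
    exact congrArg _ (BTree.numLeaves_trim_add_one h₀)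
  | succ n hn ih =>
    rw [firstLeaf_add_one, firstLeaf_add_one, trees_trim_of_ne h₀ (by omega), ← ih,
      add_right_comm]

lemma supp_trim_subset (F : IndexedForest) (i : ℕ+) : (F.trim i).supp ⊆ F.supp := fun n hn =>
  mem_supp.2 fun h => mem_supp.1 hn (by simp only [trim, h]; rfl)

lemma BS_treePoly_trim_of_ne (β : ℤ) (h₀ : i ∈ (F.trees n₀).qdesSet (F.firstLeaf n₀))
    (hn : n ≠ n₀) {k : ℕ+} (hik : i ≤ k) (hki : k ≤ i + 1) :
    BS k (treePoly β (F.trees n) (F.firstLeaf n) 1) =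
      treePoly β ((F.trim i).trees n) ((F.trim i).firstLeaf n) 1 := by
  have hi := BTree.bounds_of_mem_qdesSet h₀
  rw [trees_trim_of_ne h₀ hn]
  rcases Nat.lt_or_gt_of_ne hn with h | h
  · have := firstLeaf_add_numLeaves_le (F := F) h
    rw [firstLeaf_trim_of_le h₀ h.le, BS_treePoly_of_le (by pnat_to_nat; omega)]
  · have := firstLeaf_add_numLeaves_le (F := F) h
    rw [← firstLeaf_trim_add_one_of_lt h₀ h] at this ⊢
    exact BS_treePoly_add_one one_le one_le (by pnat_to_nat; omega)

end IndexedForest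

open IndexedForest

lemma groveP_eq_prod_treePoly_of_subset (β : ℤ) {F : IndexedForest} {s : Finset ℕ}
    (hs : F.supp ⊆ s) : groveP β F = ∏ n ∈ s, treePoly β (F.trees n) (F.firstLeaf n) 1 := by
  rw [groveP_eq_prod_treePoly]
  refine prod_subset hs fun n _ hn => ?_
  rw [not_not.1 (mem_supp.not.1 hn), treePoly, if_pos one_le]

lemma BSDiff_mul_of_BS_eq {β : ℤ} {i : ℕ+} (f : MyR) {g q : MyR} (h₁ : BS (i + 1) g = q)
    (h₀ : BS i g = q) : BSDiff β i (f * g) = BSDiff β i f * q := by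
  simp only [BSDiff, map_mul, h₁, h₀]
  ring

lemma BSDiff_groveP_of_mem_qdes {β : ℤ} {F : IndexedForest} {i : ℕ+} (hi : i ∈ F.qdes) :
    BSDiff β i (groveP β F) = X i * groveP β (F.trim i) := by
  obtain ⟨n₀, h₀⟩ := Set.mem_iUnion.1 hi
  have hn₀ : n₀ ∈ F.supp := mem_supp.2 fun h => BTree.notMem_qdesSet_leaf (h ▸ h₀)
  have hrest : ∀ k, i ≤ k → k ≤ i + 1 →
      BS k (∏ n ∈ F.supp.erase n₀, treePoly β (F.trees n) (F.firstLeaf n) 1) =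
        ∏ n ∈ F.supp.erase n₀, treePoly β ((F.trim i).trees n) ((F.trim i).firstLeaf n) 1 :=
    fun k hik hki => by
      rw [map_prod]
      exact prod_congr rfl fun n hn => BS_treePoly_trim_of_ne β h₀ (ne_of_mem_erase hn) hik hki
  rw [groveP_eq_prod_treePoly, groveP_eq_prod_treePoly_of_subset β (supp_trim_subset F i),
    ← mul_prod_erase _ _ hn₀, ← mul_prod_erase _ _ hn₀,
    BSDiff_mul_of_BS_eq _ (hrest _ (PNat.lt_add_right i 1).le le_rfl)
      (hrest _ le_rfl (PNat.lt_add_right i 1).le),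
    BSDiff_treePoly_of_mem_qdesSet one_le h₀, firstLeaf_trim_of_le h₀ le_rfl, mul_assoc]
  rfl

lemma BS_add_one_groveP_of_notMem_qdes {β : ℤ} {F : IndexedForest} {i : ℕ+}
    (hi : i ∉ F.qdes) :
    BS (i + 1) (groveP β F) = BS i (groveP β F) := by
  rw [groveP_eq_prod_treePoly, map_prod, map_prod]
  exact prod_congr rfl fun n _ =>
    BS_add_one_treePoly_of_notMem_qdesSet one_le fun h => hi (Set.mem_iUnion.2 ⟨n, h⟩)

lemma groveP_empty (β : ℤ) : groveP β IndexedForest.empty = 1 := by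
  rw [groveP_eq_prod_treePoly_of_subset β (s := ∅) fun n hn => absurd rfl (mem_supp.1 hn),
    prod_empty]

lemma constantCoeff_groveP {β : ℤ} {F : IndexedForest} (hF : F ≠ IndexedForest.empty) :
    constantCoeff (groveP β F) = 0 := by
  obtain ⟨n, hn⟩ : ∃ n, F.trees n ≠ BTree.leaf := by
    by_contra! h
    obtain ⟨trees, _⟩ := F
    exact hF (by simp only [IndexedForest.empty, IndexedForest.mk.injEq]; exact funext h)
  obtain ⟨l, r, hlr⟩ : ∃ l r, F.trees n = BTree.node l r := by
    cases h : F.trees n with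
    | leaf => exact absurd h hn
    | node l r => exact ⟨l, r, rfl⟩
  rw [groveP_eq_prod_treePoly, map_prod]
  refine prod_eq_zero (mem_supp.2 hn) ?_
  rw [hlr, treePoly, map_sum]
  exact sum_eq_zero fun m _ => by simp

/-- the grove polynomials satisfy `G_∅ = 1`, `ct G_F = 0` for
`F ≠ ∅`, and `π̃_i G_F = G_(F/i)` for `i ∈ QDes F`,
`π̃_i G_F = -β·R_i G_F` for `i ∉ QDes F`, where `π̃_i f = T_i((1+βx_(i+1))f)`. -/
theorem stmt3 (β : ℤ) (T : ℕ+ → MyR → MyR)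
    (hT : ∀ (i : ℕ+) (f : MyR), (X i : MyR) * T i f = BS (i + 1) f - BS i f) :
    groveP β IndexedForest.empty = 1 ∧
    (∀ F : IndexedForest, F ≠ IndexedForest.empty →
      constantCoeff (groveP β F) = 0) ∧
    ∀ (F : IndexedForest) (i : ℕ+),
      (i ∈ F.qdes →
        T i ((1 + C β * X (i + 1)) * groveP β F) = groveP β (F.trim i)) ∧
      (i ∉ F.qdes →
        T i ((1 + C β * X (i + 1)) * groveP β F) =
          -(C β) * BS i (groveP β F)) := by
  have hπ : ∀ (i : ℕ+) (f : MyR), X i * T i ((1 + C β * X (i + 1)) * f) = BSDiff β i f := by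
    intro i f
    rw [hT, BSDiff, map_mul, map_mul, BS_one_add_C_mul_X, BS_one_add_C_mul_X, BS_X_self,
      BS_X_add_one le_rfl, mul_zero, add_zero, one_mul]
  refine ⟨groveP_empty β, fun F hF => constantCoeff_groveP hF,
    fun F i => ⟨fun hi => ?_, fun hi => ?_⟩⟩
  · apply mul_left_cancel₀ (X_ne_zero i)
    rw [hπ, BSDiff_groveP_of_mem_qdes hi]
  · apply mul_left_cancel₀ (X_ne_zero i)
    rw [hπ, BSDiff, BS_add_one_groveP_of_notMem_qdes hi]
    ring
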